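/- Let P be a Köthe set satisfying condition (P3) (for every p ∈ P there exist q ∈ P and C > 0 with p_i ≤ C q_i² for all i). Then the Köthe space λ(P) = { x ∈ ℂ^ℕ : ‖x‖_p = Σ_n |x_n| p_n < ∞ for all p ∈ P } is closed under pointwise multiplication, and with pointwise multiplication λ(P) is an algebra with jointly continuous multiplication: for each p ∈ P there exist q ∈ P and C > 0 with ‖xy‖_p ≤ C ‖x‖_q ‖y‖_q for all x, y ∈ λ(P). -/

import Mathlib

/-!
Under (P3) every weight `p` is dominated by `C q²` for some `q ∈ P`, so termwise
`|xₙyₙ| pₙ ≤ C (|xₙ| qₙ)(|yₙ| qₙ)`; and a series of products of nonnegative summable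
sequences is bounded by the product of their sums, since each factor is bounded by its sum.
-/

section NonnegSeries

variable {ι : Type*} {a b : ι → ℝ}

theorem summable_mul_of_nonneg (ha : 0 ≤ a) (hb : 0 ≤ b) (hsa : Summable a)
    (hsb : Summable b) : Summable fun i => a i * b i :=
  (hsa.mul_right (∑' j, b j)).of_nonneg_of_le (fun i => mul_nonneg (ha i) (hb i))
    fun i => mul_le_mul_of_nonneg_left (hsb.le_tsum i fun j _ => hb j) (ha i)

theorem tsum_mul_le_tsum_mul_tsum_of_nonneg (ha : 0 ≤ a) (hb : 0 ≤ b) (hsa : Summable a)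
    (hsb : Summable b) : ∑' i, a i * b i ≤ (∑' i, a i) * ∑' i, b i :=
  calc ∑' i, a i * b i ≤ ∑' i, a i * ∑' j, b j :=
        (summable_mul_of_nonneg ha hb hsa hsb).tsum_le_tsum
          (fun i => mul_le_mul_of_nonneg_left (hsb.le_tsum i fun j _ => hb j) (ha i))
          (hsa.mul_right _)
    _ = (∑' i, a i) * ∑' i, b i := tsum_mul_right

end NonnegSeries

section WeightedProduct

variable {ι R : Type*} [SeminormedRing R] {p q : ι → ℝ} {C : ℝ} {x y : ι → R}

theorem norm_mul_mul_le_of_le_mul_sq (hp : 0 ≤ p) (hpq : ∀ i, p i ≤ C * q i ^ 2) (i : ι) :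
    ‖x i * y i‖ * p i ≤ C * ((‖x i‖ * q i) * (‖y i‖ * q i)) :=
  calc ‖x i * y i‖ * p i ≤ ‖x i‖ * ‖y i‖ * (C * q i ^ 2) :=
        mul_le_mul (norm_mul_le _ _) (hpq i) (hp i) (by positivity)
    _ = C * ((‖x i‖ * q i) * (‖y i‖ * q i)) := by ring

theorem summable_norm_mul_mul_of_le_mul_sq (hp : 0 ≤ p) (hq : 0 ≤ q)
    (hpq : ∀ i, p i ≤ C * q i ^ 2) (hx : Summable fun i => ‖x i‖ * q i)
    (hy : Summable fun i => ‖y i‖ * q i) : Summable fun i => ‖x i * y i‖ * p i :=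
  ((summable_mul_of_nonneg (fun i => mul_nonneg (norm_nonneg _) (hq i))
    (fun i => mul_nonneg (norm_nonneg _) (hq i)) hx hy).mul_left C).of_nonneg_of_le
    (fun i => mul_nonneg (norm_nonneg _) (hp i)) (norm_mul_mul_le_of_le_mul_sq hp hpq)

theorem tsum_norm_mul_mul_le_of_le_mul_sq (hp : 0 ≤ p) (hq : 0 ≤ q) (hC : 0 ≤ C)
    (hpq : ∀ i, p i ≤ C * q i ^ 2) (hx : Summable fun i => ‖x i‖ * q i)
    (hy : Summable fun i => ‖y i‖ * q i) :
    ∑' i, ‖x i * y i‖ * p i ≤ C * (∑' i, ‖x i‖ * q i) * ∑' i, ‖y i‖ * q i := by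
  have hxq : 0 ≤ fun i => ‖x i‖ * q i := fun i => mul_nonneg (norm_nonneg _) (hq i)
  have hyq : 0 ≤ fun i => ‖y i‖ * q i := fun i => mul_nonneg (norm_nonneg _) (hq i)
  calc ∑' i, ‖x i * y i‖ * p i ≤ ∑' i, C * ((‖x i‖ * q i) * (‖y i‖ * q i)) :=
        (summable_norm_mul_mul_of_le_mul_sq hp hq hpq hx hy).tsum_le_tsum
          (norm_mul_mul_le_of_le_mul_sq hp hpq)
          ((summable_mul_of_nonneg hxq hyq hx hy).mul_left C)
    _ = C * ∑' i, (‖x i‖ * q i) * (‖y i‖ * q i) := tsum_mul_left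
    _ ≤ C * ((∑' i, ‖x i‖ * q i) * ∑' i, ‖y i‖ * q i) :=
        mul_le_mul_of_nonneg_left (tsum_mul_le_tsum_mul_tsum_of_nonneg hxq hyq hx hy) hC
    _ = C * (∑' i, ‖x i‖ * q i) * ∑' i, ‖y i‖ * q i := (mul_assoc _ _ _).symm

end WeightedProduct

theorem kothe_algebra_mul_closed_and_jointly_continuous_general
    (P : Set (ℕ → ℝ))
    (hpos : ∀ p ∈ P, ∀ i, 0 ≤ p i)
    (hP3 : ∀ p ∈ P, ∃ q ∈ P, ∃ C > (0 : ℝ), ∀ i, p i ≤ C * (q i) ^ 2) :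
    (∀ x y : ℕ → ℂ,
      (∀ p ∈ P, Summable fun n => ‖x n‖ * p n) →
      (∀ p ∈ P, Summable fun n => ‖y n‖ * p n) →
      (∀ p ∈ P, Summable fun n => ‖x n * y n‖ * p n)) ∧
    (∀ p ∈ P, ∃ q ∈ P, ∃ C > (0 : ℝ), ∀ x y : ℕ → ℂ,
      (∀ p' ∈ P, Summable fun n => ‖x n‖ * p' n) →
      (∀ p' ∈ P, Summable fun n => ‖y n‖ * p' n) →
      (∑' n, ‖x n * y n‖ * p n) ≤ C * (∑' n, ‖x n‖ * q n) * (∑' n, ‖y n‖ * q n)) := by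
  constructor
  · intro x y hx hy p hp
    obtain ⟨q, hq, C, -, hpq⟩ := hP3 p hp
    exact summable_norm_mul_mul_of_le_mul_sq (hpos p hp) (hpos q hq) hpq (hx q hq) (hy q hq)
  · intro p hp
    obtain ⟨q, hq, C, hC, hpq⟩ := hP3 p hp
    exact ⟨q, hq, C, hC, fun x y hx hy =>
      tsum_norm_mul_mul_le_of_le_mul_sq (hpos p hp) (hpos q hq) hC.le hpq (hx q hq) (hy q hq)⟩

/-- For a Köthe set `P` satisfying (P1), (P2) and (P3), the Köthe space
`λ(P) = {x : Σ ‖xₙ‖ pₙ < ∞ ∀ p ∈ P}` is closed under pointwise multiplication, and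
multiplication is jointly continuous: for every `p ∈ P` there are `q ∈ P` and `C > 0`
with `‖xy‖_p ≤ C ‖x‖_q ‖y‖_q`. -/
theorem kothe_algebra_mul_closed_and_jointly_continuous
    (P : Set (ℕ → ℝ))
    (hpos : ∀ p ∈ P, ∀ i, 0 ≤ p i)
    (hP1 : ∀ i, ∃ p ∈ P, 0 < p i)
    (hP2 : ∀ p ∈ P, ∀ q ∈ P, ∃ r ∈ P, ∀ i, max (p i) (q i) ≤ r i)
    (hP3 : ∀ p ∈ P, ∃ q ∈ P, ∃ C > (0 : ℝ), ∀ i, p i ≤ C * (q i) ^ 2) :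
    (∀ x y : ℕ → ℂ,
      (∀ p ∈ P, Summable fun n => ‖x n‖ * p n) →
      (∀ p ∈ P, Summable fun n => ‖y n‖ * p n) →
      (∀ p ∈ P, Summable fun n => ‖x n * y n‖ * p n)) ∧
    (∀ p ∈ P, ∃ q ∈ P, ∃ C > (0 : ℝ), ∀ x y : ℕ → ℂ,
      (∀ p' ∈ P, Summable fun n => ‖x n‖ * p' n) →
      (∀ p' ∈ P, Summable fun n => ‖y n‖ * p' n) →
      (∑' n, ‖x n * y n‖ * p n) ≤ C * (∑' n, ‖x n‖ * q n) * (∑' n, ‖y n‖ * q n)) :=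
  kothe_algebra_mul_closed_and_jointly_continuous_general P hpos hP3
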